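/- arXiv:1406.0217 — 3 statements merged into one kernel-verified Lean document; each statement's English description precedes it below -/
import Mathlib

section
/- For every binary phylogenetic tree T on leaf set {1,…,n} and every character f : {1,…,n} → {0,1}, the parsimony score satisfies ps(f,T) ≤ ⌊n/2⌋. -/
open Classical

/-- A binary phylogenetic tree on leaf set `{1, …, n}` (represented by `Fin n`),
with vertex set `Fin (2 * n - 2)`: a connected acyclic simple graph in which every
vertex has degree 1 or 3, together with a bijective labeling of the degree-1
vertices (the leaves) by `Fin n`.  The collection of such trees is `UB(n)`. -/
structure PhyloTree (n : ℕ) where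
  adj : SimpleGraph (Fin (2 * n - 2))
  connected : adj.Connected
  acyclic : adj.IsAcyclic
  degOneOrThree : ∀ v, (adj.neighborSet v).ncard = 1 ∨ (adj.neighborSet v).ncard = 3
  leaf : Fin n → Fin (2 * n - 2)
  leaf_inj : Function.Injective leaf
  leaf_range : ∀ v, (adj.neighborSet v).ncard = 1 ↔ ∃ i, leaf i = v

/-- The changing number of an assignment `g` of states to the vertices of `T`:
the number of edges of `T` whose two endpoints receive different states. -/
noncomputable def changingNumber {n : ℕ} (T : PhyloTree n)
    (g : Fin (2 * n - 2) → Bool) : ℕ :=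
  Set.ncard {e : Sym2 (Fin (2 * n - 2)) |
    e ∈ T.adj.edgeSet ∧ ∃ u v, e = s(u, v) ∧ g u ≠ g v}

/-- The parsimony score of a character `f` on a tree `T`: the minimum changing
number over all extensions of `f` to the vertices of `T`. -/
noncomputable def ps {n : ℕ} (f : Fin n → Bool) (T : PhyloTree n) : ℕ :=
  sInf {m | ∃ g : Fin (2 * n - 2) → Bool,
    (∀ i, g (T.leaf i) = f i) ∧ changingNumber T g = m}

/-- The set of splits of `T`: for each edge `s(u, v)` of `T`, the bipartition of the
leaf labels into those whose leaf lies in the component of `u` and those whose leaf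
lies in the component of `v`, after deleting the edge. -/
def splits {n : ℕ} (T : PhyloTree n) : Set (Set (Set (Fin n))) :=
  {σ | ∃ u v, s(u, v) ∈ T.adj.edgeSet ∧
    σ = { {i | (T.adj.deleteEdges {s(u, v)}).Reachable (T.leaf i) u},
          {i | (T.adj.deleteEdges {s(u, v)}).Reachable (T.leaf i) v} } }

/-- A character `f` is compatible with a tree `T` if it is non-constant and the
partition `{f⁻¹(0), f⁻¹(1)}` equals the split of `T` at some edge. -/
def CompatibleWithTree {n : ℕ} (f : Fin n → Bool) (T : PhyloTree n) : Prop :=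
  (∃ i j, f i ≠ f j) ∧
    ({ {i | f i = false}, {i | f i = true} } : Set (Set (Fin n))) ∈ splits T

/-- Two characters are compatible with each other if at least one of the four
intersections of their preimage sets is empty. -/
def CharCompatible {n : ℕ} (f₁ f₂ : Fin n → Bool) : Prop :=
  {i | f₁ i = false} ∩ {i | f₂ i = false} = ∅ ∨
  {i | f₁ i = false} ∩ {i | f₂ i = true} = ∅ ∨
  {i | f₁ i = true} ∩ {i | f₂ i = false} = ∅ ∨
  {i | f₁ i = true} ∩ {i | f₂ i = true} = ∅

/-- A tree on six leaves has the symmetric shape if some vertex has all three of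
its neighbors of degree 3. -/
def IsSymmetricShape (T : PhyloTree 6) : Prop :=
  ∃ v, (T.adj.neighborSet v).ncard = 3 ∧
    ∀ u ∈ T.adj.neighborSet v, (T.adj.neighborSet u).ncard = 3

/-- A tree on six leaves has the caterpillar shape if no vertex has all three of
its neighbors of degree 3. -/
def IsCaterpillarShape (T : PhyloTree 6) : Prop :=
  ¬ ∃ v, (T.adj.neighborSet v).ncard = 3 ∧
    ∀ u ∈ T.adj.neighborSet v, (T.adj.neighborSet u).ncard = 3

/-- `T` is a maximum parsimony tree for the sequence of characters `F`. -/
def IsMPTree {n k : ℕ} (F : Fin k → Fin n → Bool) (T : PhyloTree n) : Prop :=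
  ∀ T' : PhyloTree n, (∑ i, ps (F i) T) ≤ ∑ i, ps (F i) T'

/-!
Colour every internal vertex with the majority state `c` of `f`. An edge then changes state
only if one of its endpoints is a leaf whose state is not `c`, and a leaf lies on exactly one
edge, so the changing number of this extension is at most the number of minority leaves,
which is at most `⌊n/2⌋`.
-/

theorem Bool.exists_ncard_setOf_ne_le_half {α : Type*} [Fintype α] (f : α → Bool) :
    ∃ c, {a | f a ≠ c}.ncard ≤ Fintype.card α / 2 := by
  have hsum : {a | f a ≠ true}.ncard + {a | f a ≠ false}.ncard = Fintype.card α := by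
    rw [← Nat.card_eq_fintype_card, ← Set.ncard_add_ncard_compl {a | f a ≠ true}]
    congr 2
    ext a
    simp
  by_cases h : {a | f a ≠ true}.ncard ≤ Fintype.card α / 2
  · exact ⟨true, h⟩
  · exact ⟨false, by omega⟩

namespace SimpleGraph

variable {V : Type*} (G : SimpleGraph V)

theorem incidenceSet_subsingleton_of_ncard_neighborSet_eq_one {v : V}
    (hv : (G.neighborSet v).ncard = 1) : (G.incidenceSet v).Subsingleton := by
  obtain ⟨a, ha⟩ := Set.ncard_eq_one.mp hv
  have : Subsingleton (G.neighborSet v) := by rw [ha]; infer_instance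
  exact Set.subsingleton_coe _ |>.mp (G.incidenceSetEquivNeighborSet v).subsingleton

/-- Each edge meeting `s` is sent to an endpoint in `s`; this is injective because no vertex
of `s` lies on two edges. -/
theorem ncard_edges_meeting_le [Finite V] {s : Set V}
    (hs : ∀ v ∈ s, (G.incidenceSet v).Subsingleton) :
    {e ∈ G.edgeSet | ∃ v ∈ s, v ∈ e}.ncard ≤ s.ncard := by
  let endpoint : Sym2 V → V := fun e => if e.out.1 ∈ s then e.out.1 else e.out.2
  have endpoint_mem : ∀ e, (∃ v ∈ s, v ∈ e) → endpoint e ∈ s ∧ endpoint e ∈ e := by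
    rintro e ⟨v, hvs, hve⟩
    by_cases h₁ : e.out.1 ∈ s
    · simp only [endpoint, if_pos h₁]
      exact ⟨h₁, Sym2.out_fst_mem e⟩
    · simp only [endpoint, if_neg h₁]
      rw [← Quot.out_eq e] at hve
      rcases Sym2.mem_iff.mp hve with rfl | rfl
      · exact absurd hvs h₁
      · exact ⟨hvs, Sym2.out_snd_mem e⟩
  refine Set.ncard_le_ncard_of_injOn endpoint (fun e he => (endpoint_mem e he.2).1) ?_
  rintro e₁ ⟨he₁, hm₁⟩ e₂ ⟨he₂, hm₂⟩ heq
  obtain ⟨hs₁, hw₁⟩ := endpoint_mem e₁ hm₁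
  obtain ⟨-, hw₂⟩ := endpoint_mem e₂ hm₂
  rw [heq] at hs₁ hw₁
  exact hs _ hs₁ ⟨he₁, hw₁⟩ ⟨he₂, hw₂⟩

end SimpleGraph

namespace PhyloTree

variable {n : ℕ} (T : PhyloTree n)

theorem incidenceSet_leaf_subsingleton (i : Fin n) : (T.adj.incidenceSet (T.leaf i)).Subsingleton :=
  T.adj.incidenceSet_subsingleton_of_ncard_neighborSet_eq_one ((T.leaf_range _).mpr ⟨i, rfl⟩)

theorem ps_le_changingNumber {f : Fin n → Bool} {g : Fin (2 * n - 2) → Bool}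
    (hg : ∀ i, g (T.leaf i) = f i) : ps f T ≤ changingNumber T g :=
  Nat.sInf_le ⟨g, hg, rfl⟩

theorem changingNumber_extend_le (f : Fin n → Bool) (c : Bool) :
    changingNumber T (Function.extend T.leaf f fun _ => c) ≤ {i | f i ≠ c}.ncard := by
  set g := Function.extend T.leaf f fun _ => c
  have leaf_of_ne : ∀ w, g w ≠ c → w ∈ T.leaf '' {i | f i ≠ c} := by
    intro w hw
    by_cases hleaf : ∃ i, T.leaf i = w
    · obtain ⟨i, rfl⟩ := hleaf
      exact ⟨i, (T.leaf_inj.extend_apply f _ i).symm.trans_ne hw, rfl⟩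
    · exact absurd (Function.extend_apply' _ _ _ hleaf) hw
  calc changingNumber T g
      ≤ {e ∈ T.adj.edgeSet | ∃ v ∈ T.leaf '' {i | f i ≠ c}, v ∈ e}.ncard := by
        refine Set.ncard_le_ncard ?_ (Set.toFinite _)
        rintro _ ⟨he, u, v, rfl, huv⟩
        refine ⟨he, ?_⟩
        by_cases hu : g u = c
        · exact ⟨v, leaf_of_ne v (hu ▸ huv.symm), Sym2.mem_mk_right u v⟩
        · exact ⟨u, leaf_of_ne u hu, Sym2.mem_mk_left u v⟩
    _ ≤ (T.leaf '' {i | f i ≠ c}).ncard := by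
        refine T.adj.ncard_edges_meeting_le ?_
        rintro _ ⟨i, -, rfl⟩
        exact T.incidenceSet_leaf_subsingleton i
    _ = {i | f i ≠ c}.ncard := Set.ncard_image_of_injective _ T.leaf_inj

end PhyloTree

theorem stmt2_general (n : ℕ) (T : PhyloTree n) (f : Fin n → Bool) :
    ps f T ≤ n / 2 := by
  obtain ⟨c, hc⟩ := Bool.exists_ncard_setOf_ne_le_half f
  rw [Fintype.card_fin] at hc
  calc ps f T ≤ changingNumber T (Function.extend T.leaf f fun _ => c) :=
        T.ps_le_changingNumber (T.leaf_inj.extend_apply f _)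
    _ ≤ {i | f i ≠ c}.ncard := T.changingNumber_extend_le f c
    _ ≤ n / 2 := hc

/-- The parsimony score of any two-state character on a binary phylogenetic tree
on {1,…,n} is at most ⌊n/2⌋. -/
theorem stmt2 (n : ℕ) (hn : 2 ≤ n) (T : PhyloTree n) (f : Fin n → Bool) :
    ps f T ≤ n / 2 :=
  stmt2_general n T f
end

section
/- Let T_1 and T_2 be binary phylogenetic trees on leaf set {1,…,n} that have the same shape, i.e., there is a graph isomorphism between the underlying graphs of T_1 and T_2. Then for every k ≥ 1, the number of k-tuples (f_1,…,f_k) of characters for which T_1 is a maximum parsimony tree equals the number of k-tuples for which T_2 is a maximum parsimony tree. -/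
/-! A graph isomorphism `T₁ ≃g T₂` preserves degrees, so it sends leaves to leaves and induces
a permutation `π` of the leaf labels. Transporting extensions along the isomorphism gives
`ps (f ∘ π⁻¹) T₂ = ps f T₁`, and relabelling the leaves of every competing tree by `π` is a
bijection of `UB(n)`; hence `F` is an MP tuple for `T₁` iff `F ∘ π⁻¹` is one for `T₂`, and
`F ↦ F ∘ π⁻¹` is a bijection between the two sets of tuples. -/

open Classical

namespace PhyloTree

variable {n : ℕ}

def relabel (T : PhyloTree n) (π : Equiv.Perm (Fin n)) : PhyloTree n where
  adj := T.adj
  connected := T.connected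
  acyclic := T.acyclic
  degOneOrThree := T.degOneOrThree
  leaf := T.leaf ∘ π
  leaf_inj := T.leaf_inj.comp π.injective
  leaf_range v := (T.leaf_range v).trans π.surjective.exists

theorem mem_changedEdges_iff {G : SimpleGraph (Fin (2 * n - 2))} (g : Fin (2 * n - 2) → Bool)
    (a b : Fin (2 * n - 2)) :
    s(a, b) ∈ {e | e ∈ G.edgeSet ∧ ∃ u v, e = s(u, v) ∧ g u ≠ g v} ↔ G.Adj a b ∧ g a ≠ g b := by
  refine and_congr_right fun _ => ⟨?_, fun h => ⟨a, b, rfl, h⟩⟩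
  rintro ⟨u, v, huv, h⟩
  rcases Sym2.eq_iff.mp huv with ⟨rfl, rfl⟩ | ⟨rfl, rfl⟩
  exacts [h, h.symm]

theorem changingNumber_comp_iso {T₁ T₂ : PhyloTree n} (φ : T₁.adj ≃g T₂.adj)
    (g : Fin (2 * n - 2) → Bool) :
    changingNumber T₁ (g ∘ φ) = changingNumber T₂ g := by
  unfold changingNumber
  have hpre : {e | e ∈ T₁.adj.edgeSet ∧ ∃ u v, e = s(u, v) ∧ (g ∘ φ) u ≠ (g ∘ φ) v} =
      Sym2.map φ ⁻¹' {e | e ∈ T₂.adj.edgeSet ∧ ∃ u v, e = s(u, v) ∧ g u ≠ g v} := by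
    ext e
    induction e using Sym2.ind with
    | _ a b =>
      rw [Set.mem_preimage, Sym2.map_mk, mem_changedEdges_iff, mem_changedEdges_iff,
        φ.map_adj_iff, Function.comp_apply, Function.comp_apply]
  rw [hpre, Set.ncard_preimage_of_injective_subset_range (Sym2.map.injective φ.injective)]
  exact fun e _ => ⟨Sym2.map φ.symm e, by simp [Sym2.map_map]⟩

theorem ps_comp_symm_of_iso {T₁ T₂ : PhyloTree n} (φ : T₁.adj ≃g T₂.adj)
    (π : Equiv.Perm (Fin n)) (hπ : ∀ i, T₂.leaf (π i) = φ (T₁.leaf i)) (f : Fin n → Bool) :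
    ps (f ∘ π.symm) T₂ = ps f T₁ := by
  unfold ps
  congr 1
  ext m
  constructor
  · rintro ⟨g, hg, rfl⟩
    exact ⟨g ∘ φ, fun i => by simpa [← hπ] using hg (π i), changingNumber_comp_iso φ g⟩
  · rintro ⟨g, hg, rfl⟩
    refine ⟨g ∘ φ.symm, fun j => ?_, ?_⟩
    · obtain ⟨i, rfl⟩ := π.surjective j
      simp [hπ, hg]
    · rw [← changingNumber_comp_iso φ]
      simp [Function.comp_def]

theorem ps_relabel (T : PhyloTree n) (π : Equiv.Perm (Fin n)) (f : Fin n → Bool) :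
    ps f (T.relabel π) = ps (f ∘ π.symm) T :=
  (ps_comp_symm_of_iso (T₁ := T.relabel π) (T₂ := T) SimpleGraph.Iso.refl π (fun _ => rfl) f).symm

theorem exists_leafPerm_of_iso {T₁ T₂ : PhyloTree n} (φ : T₁.adj ≃g T₂.adj) :
    ∃ π : Equiv.Perm (Fin n), ∀ i, T₂.leaf (π i) = φ (T₁.leaf i) := by
  have hleaf (i : Fin n) : ∃ j, T₂.leaf j = φ (T₁.leaf i) := by
    rw [← T₂.leaf_range, ← Set.ncard_congr' (φ.mapNeighborSet _), T₁.leaf_range]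
    exact ⟨i, rfl⟩
  choose σ hσ using hleaf
  have hσ_inj : σ.Injective := fun i i' h =>
    T₁.leaf_inj <| φ.injective <| by rw [← hσ, ← hσ, h]
  exact ⟨Equiv.ofBijective σ (Finite.injective_iff_bijective.mp hσ_inj), hσ⟩

theorem isMPTree_comp_symm_iff_of_iso {T₁ T₂ : PhyloTree n} (φ : T₁.adj ≃g T₂.adj)
    (π : Equiv.Perm (Fin n)) (hπ : ∀ i, T₂.leaf (π i) = φ (T₁.leaf i))
    {k : ℕ} (F : Fin k → Fin n → Bool) :
    IsMPTree (fun j => F j ∘ π.symm) T₂ ↔ IsMPTree F T₁ := by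
  simp only [IsMPTree, ps_comp_symm_of_iso φ π hπ]
  constructor
  · intro h T'
    simpa [ps_relabel, Function.comp_def] using h (T'.relabel π.symm)
  · intro h T'
    simpa [ps_relabel] using h (T'.relabel π)

end PhyloTree

theorem stmt6_general (n k : ℕ) (T₁ T₂ : PhyloTree n)
    (hshape : Nonempty (T₁.adj ≃g T₂.adj)) :
    Set.ncard {F : Fin k → Fin n → Bool | IsMPTree F T₁} =
      Set.ncard {F : Fin k → Fin n → Bool | IsMPTree F T₂} := by
  obtain ⟨φ⟩ := hshape
  obtain ⟨π, hπ⟩ := PhyloTree.exists_leafPerm_of_iso φ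
  let e : (Fin k → Fin n → Bool) ≃ (Fin k → Fin n → Bool) :=
    Equiv.piCongrRight fun _ => π.arrowCongr (Equiv.refl Bool)
  have hpre : {F | IsMPTree F T₁} = e ⁻¹' {F | IsMPTree F T₂} :=
    Set.ext fun F => (PhyloTree.isMPTree_comp_symm_iff_of_iso φ π hπ F).symm
  rw [hpre, Set.ncard_preimage_of_injective_subset_range e.injective (by simp)]

/-- If two binary phylogenetic trees on {1,…,n} have the same shape (their
underlying graphs are isomorphic), then for every k ≥ 1 the number of k-tuples of
characters for which the first is a maximum parsimony tree equals the number for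
which the second is. -/
theorem stmt6 (n k : ℕ) (hn : 2 ≤ n) (hk : 1 ≤ k) (T₁ T₂ : PhyloTree n)
    (hshape : Nonempty (T₁.adj ≃g T₂.adj)) :
    Set.ncard {F : Fin k → Fin n → Bool | IsMPTree F T₁} =
      Set.ncard {F : Fin k → Fin n → Bool | IsMPTree F T₂} :=
  stmt6_general n k T₁ T₂ hshape
end

section
/- Let f_1 and f_2 be non-constant characters on {1,…,n}. Then f_1 and f_2 are compatible with each other (i.e., at least one of the four sets f_1^{-1}(0) ∩ f_2^{-1}(0), f_1^{-1}(0) ∩ f_2^{-1}(1), f_1^{-1}(1) ∩ f_2^{-1}(0), f_1^{-1}(1) ∩ f_2^{-1}(1) is empty) if and only if there exists a binary phylogenetic tree T on leaf set {1,…,n} with ps(f_1,T) = 1 and ps(f_2,T) = 1. -/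
open Classical

/-!
Compatibility of `f₁` and `f₂` says that `{f₁ = p} ⊆ {f₂ = q}` for some states `p, q`. Listing
the leaves so that `{f₁ = p}` comes first and the rest of `{f₂ = q}` next makes both classes
initial segments, and on the caterpillar with this leaf order each character then changes across
a single spine edge.

Conversely, if both scores are one, optimal extensions `g₁, g₂` change across single edges
`e₁, e₂`. Deleting `e₁` splits the tree into two sides on which `g₁` takes different constant
values, and `e₂` misses one of them, so `g₂` is constant on that side as well. The leaves where
`f₁` takes the value of `g₁` on that side are exactly its leaves, and there `f₂` is constant.
-/

namespace SimpleGraph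

variable {V : Type*} {G : SimpleGraph V}

theorem Reachable.apply_eq_of_forall_adj {α : Type*} {F : V → α} {x y : V} (hxy : G.Reachable x y)
    (hF : ∀ a b, G.Reachable x a → G.Adj a b → F a = F b) : F x = F y := by
  obtain ⟨w⟩ := hxy
  induction w with
  | nil => rfl
  | cons hab _ ih =>
    exact (hF _ _ .rfl hab).trans (ih fun a b hra ↦ hF a b (hab.reachable.trans hra))

theorem Preconnected.reachable_or_reachable_deleteEdges (hG : G.Preconnected) (u v x : V) :
    (G.deleteEdges {s(u, v)}).Reachable x u ∨ (G.deleteEdges {s(u, v)}).Reachable x v := by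
  let side : V → Prop := fun x ↦
    (G.deleteEdges {s(u, v)}).Reachable x u ∨ (G.deleteEdges {s(u, v)}).Reachable x v
  have hside : side u = side x := (hG u x).apply_eq_of_forall_adj fun a b _ hab ↦ by
    by_cases he : s(a, b) = s(u, v)
    · rcases Sym2.eq_iff.mp he with ⟨rfl, rfl⟩ | ⟨rfl, rfl⟩ <;> simp [side]
    · have hab' : (G.deleteEdges {s(u, v)}).Adj a b := by simp [hab, he]
      simp only [side, eq_iff_iff]
      exact or_congr ⟨hab'.reachable.symm.trans, hab'.reachable.trans⟩
        ⟨hab'.reachable.symm.trans, hab'.reachable.trans⟩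
  exact (eq_iff_iff.mp hside).mp (Or.inl .rfl)

theorem isAcyclic_fromRel_parent [PartialOrder V] (p : V → V) (hp : ∀ v, v ≤ p v) :
    (fromRel fun v w ↦ p v = w).IsAcyclic := by
  refine isAcyclic_iff_forall_adj_isBridge.mpr fun c d hcd ↦ ?_
  wlog hpc : p c = d generalizing c d
  · have hpd : p d = c := ((fromRel_adj _ _ _).mp hcd).2.resolve_left hpc
    exact Sym2.eq_swap (a := c) ▸ this d c hcd.symm hpd
  subst hpc
  rw [isBridge_iff]
  intro hreach
  -- The descendants of `c` are separated from the rest by the edge `s(c, p c)` alone.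
  let desc : V → Prop := fun v ↦ ∃ k, p^[k] v = c
  have hstep : ∀ a, s(a, p a) ≠ s(c, p c) → (desc a ↔ desc (p a)) := by
    refine fun a ha ↦ ⟨?_, fun ⟨k, hk⟩ ↦ ⟨k + 1, by rwa [Function.iterate_succ_apply]⟩⟩
    rintro ⟨_ | k, hk⟩
    · exact absurd (hk ▸ rfl) ha
    · exact ⟨k, by rwa [Function.iterate_succ_apply] at hk⟩
  have hdesc : desc c = desc (p c) := hreach.apply_eq_of_forall_adj fun a b _ hab ↦ by
    obtain ⟨hab, hne⟩ := deleteEdges_adj.mp hab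
    obtain ⟨-, rfl | rfl⟩ := (fromRel_adj _ _ _).mp hab
    · exact propext (hstep a (by simpa using hne))
    · exact propext (hstep b (by simpa [Sym2.eq_swap] using hne)).symm
  obtain ⟨k, hk⟩ := (eq_iff_iff.mp hdesc).mp ⟨0, rfl⟩
  have hlt : c < p c := (hp c).lt_of_ne ((fromRel_adj _ _ _).mp hcd).1
  have hle := Function.id_le_iterate_of_id_le hp k (p c)
  rw [hk] at hle
  exact hlt.not_ge hle

theorem reachable_fromRel_parent [PartialOrder V] [WellFoundedGT V] (p : V → V) (r : V)
    (hp : ∀ v, v ≠ r → v < p v) (v : V) : (fromRel fun v w ↦ p v = w).Reachable v r := by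
  induction v using WellFoundedGT.induction with
  | _ v ih =>
    by_cases hv : v = r
    · exact hv ▸ .rfl
    · have hadj : (fromRel fun v w ↦ p v = w).Adj v (p v) :=
        (fromRel_adj _ _ _).mpr ⟨(hp v hv).ne, .inl rfl⟩
      exact hadj.reachable.trans (ih _ (hp v hv))

end SimpleGraph

section Parsimony

variable {n : ℕ}

def changingEdges (T : PhyloTree n) (g : Fin (2 * n - 2) → Bool) : Set (Sym2 (Fin (2 * n - 2))) :=
  {e | e ∈ T.adj.edgeSet ∧ ∃ u v, e = s(u, v) ∧ g u ≠ g v}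

theorem changingNumber_eq_ncard (T : PhyloTree n) (g : Fin (2 * n - 2) → Bool) :
    changingNumber T g = (changingEdges T g).ncard := rfl

theorem mem_changingEdges {T : PhyloTree n} {g : Fin (2 * n - 2) → Bool} {x y : Fin (2 * n - 2)} :
    s(x, y) ∈ changingEdges T g ↔ T.adj.Adj x y ∧ g x ≠ g y := by
  refine ⟨fun ⟨hxy, u, v, he, huv⟩ ↦ ⟨hxy, ?_⟩, fun ⟨hxy, hg⟩ ↦ ⟨hxy, x, y, rfl, hg⟩⟩
  rcases Sym2.eq_iff.mp he with ⟨rfl, rfl⟩ | ⟨rfl, rfl⟩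
  exacts [huv, huv.symm]

theorem apply_eq_of_adj_of_changingNumber_eq_zero {T : PhyloTree n} {g : Fin (2 * n - 2) → Bool}
    (h : changingNumber T g = 0) {x y : Fin (2 * n - 2)} (hxy : T.adj.Adj x y) : g x = g y := by
  rw [changingNumber_eq_ncard, Set.ncard_eq_zero] at h
  by_contra hne
  simpa [h] using mem_changingEdges.mpr ⟨hxy, hne⟩

theorem exists_changing_edge_of_changingNumber_eq_one {T : PhyloTree n} {g : Fin (2 * n - 2) → Bool}
    (h : changingNumber T g = 1) :
    ∃ u v, T.adj.Adj u v ∧ g u ≠ g v ∧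
      ∀ x y, T.adj.Adj x y → g x ≠ g y → s(x, y) = s(u, v) := by
  obtain ⟨e, he⟩ := Set.ncard_eq_one.mp h
  induction e with | h u v =>
  obtain ⟨huv, hg⟩ := mem_changingEdges.mp (he ▸ Set.mem_singleton s(u, v))
  exact ⟨u, v, huv, hg, fun x y hxy hgxy ↦
    Set.mem_singleton_iff.mp (he ▸ mem_changingEdges.mpr ⟨hxy, hgxy⟩)⟩

theorem ps_le_changingNumber {T : PhyloTree n} {f : Fin n → Bool} {g : Fin (2 * n - 2) → Bool}
    (hg : ∀ i, g (T.leaf i) = f i) : ps f T ≤ changingNumber T g :=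
  Nat.sInf_le ⟨g, hg, rfl⟩

theorem exists_changingNumber_eq_ps (T : PhyloTree n) (f : Fin n → Bool) :
    ∃ g : Fin (2 * n - 2) → Bool, (∀ i, g (T.leaf i) = f i) ∧ changingNumber T g = ps f T :=
  Nat.sInf_mem (s := {m | ∃ g : Fin (2 * n - 2) → Bool,
    (∀ i, g (T.leaf i) = f i) ∧ changingNumber T g = m})
    ⟨_, Function.extend T.leaf f default, T.leaf_inj.extend_apply f default, rfl⟩

theorem one_le_ps {T : PhyloTree n} {f : Fin n → Bool} (hf : ∃ i j, f i ≠ f j) : 1 ≤ ps f T := by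
  obtain ⟨g, hg, hgf⟩ := exists_changingNumber_eq_ps T f
  rw [Nat.one_le_iff_ne_zero, ← hgf]
  intro h0
  obtain ⟨i, j, hij⟩ := hf
  refine hij ?_
  rw [← hg i, ← hg j]
  exact (T.connected.preconnected _ _).apply_eq_of_forall_adj fun _ _ _ hab ↦
    apply_eq_of_adj_of_changingNumber_eq_zero h0 hab

end Parsimony

section Compatibility

variable {n : ℕ} {f₁ f₂ : Fin n → Bool}

theorem charCompatible_iff : CharCompatible f₁ f₂ ↔ ∃ p q, ∀ i, f₁ i = p → f₂ i = q := by
  have hempty : ∀ p q, {i | f₁ i = p} ∩ {i | f₂ i = q} = ∅ ↔ ∀ i, f₁ i = p → f₂ i = !q := by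
    simp [Set.eq_empty_iff_forall_notMem]
  simp only [CharCompatible, hempty, Bool.exists_bool, Bool.not_false, Bool.not_true]
  tauto

theorem exists_perm_isLowerSet {p q : Bool} (h : ∀ i, f₁ i = p → f₂ i = q) :
    ∃ σ : Equiv.Perm (Fin n), IsLowerSet {k | f₁ (σ k) = p} ∧ IsLowerSet {k | f₂ (σ k) = q} := by
  -- Sorting by this rank lists `{f₁ = p}` first, then the rest of `{f₂ = q}`, then the others.
  let r : Fin n → ℕ := fun i ↦ (if f₁ i = p then 0 else 1) + (if f₂ i = q then 0 else 1)
  have hr₁ : {k | f₁ (Tuple.sort r k) = p} = (r ∘ Tuple.sort r) ⁻¹' Set.Iio 1 := by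
    ext k
    have := h (Tuple.sort r k)
    simp only [Set.mem_ofPred_eq, Set.mem_preimage, Function.comp_apply, Set.mem_Iio, r]
    split_ifs <;> simp_all
  have hr₂ : {k | f₂ (Tuple.sort r k) = q} = (r ∘ Tuple.sort r) ⁻¹' Set.Iio 2 := by
    ext k
    have := h (Tuple.sort r k)
    simp only [Set.mem_ofPred_eq, Set.mem_preimage, Function.comp_apply, Set.mem_Iio, r]
    split_ifs <;> simp_all
  exact ⟨Tuple.sort r, hr₁ ▸ (isLowerSet_Iio 1).preimage (Tuple.monotone_sort r),
    hr₂ ▸ (isLowerSet_Iio 2).preimage (Tuple.monotone_sort r)⟩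

theorem charCompatible_of_ps_eq_one {T : PhyloTree n} (h₁ : ps f₁ T = 1) (h₂ : ps f₂ T = 1) :
    CharCompatible f₁ f₂ := by
  obtain ⟨g₁, hg₁, hcn₁⟩ := exists_changingNumber_eq_ps T f₁
  obtain ⟨g₂, hg₂, hcn₂⟩ := exists_changingNumber_eq_ps T f₂
  obtain ⟨u, v, huv, hg₁uv, hcut₁⟩ := exists_changing_edge_of_changingNumber_eq_one (hcn₁.trans h₁)
  obtain ⟨u₂, v₂, -, -, hcut₂⟩ := exists_changing_edge_of_changingNumber_eq_one (hcn₂.trans h₂)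
  set G := T.adj.deleteEdges {s(u, v)}
  have hsep : ¬ G.Reachable u v :=
    SimpleGraph.isBridge_iff.mp (SimpleGraph.isAcyclic_iff_forall_adj_isBridge.mp T.acyclic huv)
  have hside := T.connected.preconnected.reachable_or_reachable_deleteEdges u v
  have hG₁ : ∀ x y, G.Reachable x y → g₁ x = g₁ y := fun x y hxy ↦
    hxy.apply_eq_of_forall_adj fun a b _ hab ↦ by
      obtain ⟨hab, hab'⟩ := SimpleGraph.deleteEdges_adj.mp hab
      by_contra hne
      exact hab' (hcut₁ a b hab hne)
  -- The edge where `g₂` changes lies in at most one of the two sides of `s(u, v)`.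
  have hconst₂ : (∀ a b, G.Reachable u a → G.Adj a b → g₂ a = g₂ b) ∨
      (∀ a b, G.Reachable v a → G.Adj a b → g₂ a = g₂ b) := by
    by_contra! ⟨⟨a, b, hua, hab, hgab⟩, ⟨a', b', hva', hab', hgab'⟩⟩
    have hedge : s(a, b) = s(a', b') :=
      (hcut₂ a b (SimpleGraph.deleteEdges_le _ hab) hgab).trans
        (hcut₂ a' b' (SimpleGraph.deleteEdges_le _ hab') hgab').symm
    rcases Sym2.eq_iff.mp hedge with ⟨rfl, rfl⟩ | ⟨rfl, rfl⟩
    · exact hsep (hua.trans hva'.symm)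
    · exact hsep ((hua.trans hab.reachable).trans hva'.symm)
  obtain ⟨t, t', hside', hne, hG₂⟩ : ∃ t t', (∀ x, G.Reachable x t ∨ G.Reachable x t') ∧
      g₁ t ≠ g₁ t' ∧ ∀ a b, G.Reachable t a → G.Adj a b → g₂ a = g₂ b := by
    rcases hconst₂ with hu | hv
    exacts [⟨u, v, hside, hg₁uv, hu⟩, ⟨v, u, fun x ↦ (hside x).symm, hg₁uv.symm, hv⟩]
  refine charCompatible_iff.mpr ⟨g₁ t, g₂ t, fun i hi ↦ ?_⟩
  have hit : G.Reachable (T.leaf i) t := (hside' (T.leaf i)).resolve_right fun hit' ↦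
    hne (by rw [← hG₁ _ _ hit', hg₁, hi])
  rw [← hg₂, (hit.symm.apply_eq_of_forall_adj hG₂).symm]

end Compatibility

/- The caterpillar on `2 * n - 2` vertices: the leaves are `0` and the odd vertices, the spine is
`2, 4, …, 2 * n - 4`, and each vertex is joined to `parent n v`, the next spine vertex (the last
spine vertex to the last leaf `2 * n - 3`). -/
namespace Caterpillar

variable {n : ℕ}

def parent (n : ℕ) (v : Fin (2 * n - 2)) : Fin (2 * n - 2) :=
  ⟨min (v + 2 - v % 2) (2 * n - 3), by omega⟩

def graph (n : ℕ) : SimpleGraph (Fin (2 * n - 2)) :=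
  SimpleGraph.fromRel fun v w ↦ parent n v = w

theorem graph_adj {v w : Fin (2 * n - 2)} :
    (graph n).Adj v w ↔ (v : ℕ) ≠ w ∧ (min ((v : ℕ) + 2 - v % 2) (2 * n - 3) = w ∨
      min ((w : ℕ) + 2 - w % 2) (2 * n - 3) = v) := by
  simp [graph, parent, Fin.ext_iff]

theorem graph_connected (hn : 2 ≤ n) : (graph n).Connected := by
  let root : Fin (2 * n - 2) := ⟨2 * n - 3, by omega⟩
  have hroot (v : Fin (2 * n - 2)) : (graph n).Reachable v root :=
    SimpleGraph.reachable_fromRel_parent (parent n) root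
      (fun v hv ↦ by simp only [ne_eq, Fin.ext_iff, root] at hv; simp [Fin.lt_def, parent]; omega) v
  exact (graph n).connected_iff_exists_forall_reachable.mpr ⟨root, fun v ↦ (hroot v).symm⟩

theorem graph_isAcyclic : (graph n).IsAcyclic :=
  SimpleGraph.isAcyclic_fromRel_parent (parent n) fun v ↦ by simp [Fin.le_def, parent]; omega

theorem neighborSet_of_spine {v : Fin (2 * n - 2)} (hv : (v : ℕ) % 2 = 0) (h0 : 0 < (v : ℕ)) :
    (graph n).neighborSet v = {⟨v - 2, by omega⟩, ⟨v - 1, by omega⟩, parent n v} := by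
  ext w
  simp only [SimpleGraph.mem_neighborSet, graph_adj, Set.mem_insert_iff, Set.mem_singleton_iff,
    Fin.ext_iff, parent]
  omega

theorem neighborSet_of_leaf {v : Fin (2 * n - 2)} (hv : (v : ℕ) % 2 = 1 ∨ (v : ℕ) = 0) :
    (graph n).neighborSet v =
      {if (v : ℕ) = 2 * n - 3 then ⟨2 * n - 4, by omega⟩ else parent n v} := by
  ext w
  simp only [SimpleGraph.mem_neighborSet, graph_adj, Set.mem_singleton_iff, Fin.ext_iff]
  split <;> simp only [parent] <;> omega

theorem ncard_neighborSet (v : Fin (2 * n - 2)) :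
    ((graph n).neighborSet v).ncard = if (v : ℕ) % 2 = 0 ∧ 0 < (v : ℕ) then 3 else 1 := by
  split_ifs with hv
  · rw [neighborSet_of_spine hv.1 hv.2, Set.ncard_insert_of_notMem, Set.ncard_pair]
    · simp [Fin.ext_iff, parent]
      omega
    · simp [Fin.ext_iff, parent]
      omega
  · rw [neighborSet_of_leaf (by omega), Set.ncard_singleton]

/-- Leaf `k` sits at vertex `2 * k - 1`; truncated subtraction puts leaf `0` at vertex `0`. -/
def leafVertex (hn : 2 ≤ n) (k : Fin n) : Fin (2 * n - 2) :=
  ⟨2 * k - 1, by omega⟩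

def leafIndex (v : Fin (2 * n - 2)) : Fin n :=
  ⟨(v + 1) / 2, by omega⟩

theorem leafIndex_leafVertex (hn : 2 ≤ n) (k : Fin n) : leafIndex (leafVertex hn k) = k := by
  simp only [leafIndex, leafVertex, Fin.ext_iff]
  omega

theorem ncard_neighborSet_eq_one_iff (hn : 2 ≤ n) (v : Fin (2 * n - 2)) :
    ((graph n).neighborSet v).ncard = 1 ↔ ∃ k, leafVertex hn k = v := by
  rw [ncard_neighborSet]
  constructor
  · intro hv
    refine ⟨leafIndex v, Fin.ext ?_⟩
    simp only [leafIndex, leafVertex]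
    split_ifs at hv <;> omega
  · rintro ⟨k, rfl⟩
    rw [if_neg]
    simp only [leafVertex]
    omega

def tree (hn : 2 ≤ n) (σ : Equiv.Perm (Fin n)) : PhyloTree n where
  adj := graph n
  connected := graph_connected hn
  acyclic := graph_isAcyclic
  degOneOrThree v := by
    rw [ncard_neighborSet]
    split_ifs <;> simp
  leaf i := leafVertex hn (σ.symm i)
  leaf_inj := (Function.LeftInverse.injective (leafIndex_leafVertex hn)).comp σ.symm.injective
  leaf_range v := (ncard_neighborSet_eq_one_iff hn v).trans σ.symm.surjective.exists

theorem eq_parent_of_adj_of_leafIndex_lt {v w : Fin (2 * n - 2)} (h : (graph n).Adj v w)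
    (hlt : leafIndex v < leafIndex w) :
    w = parent n v ∧ (v : ℕ) = 2 * leafIndex v ∧ (leafIndex w : ℕ) = leafIndex v + 1 := by
  rw [graph_adj] at h
  simp only [leafIndex, Fin.lt_def] at hlt ⊢
  simp only [parent, Fin.ext_iff]
  omega

theorem exists_parent_of_mem_changingEdges (hn : 2 ≤ n) (σ : Equiv.Perm (Fin n))
    {f : Fin n → Bool} {c : Bool} (hf : IsLowerSet {k | f (σ k) = c}) {e : Sym2 (Fin (2 * n - 2))}
    (he : e ∈ changingEdges (tree hn σ) fun v ↦ f (σ (leafIndex v))) :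
    ∃ v, e = s(v, parent n v) ∧ (v : ℕ) = 2 * leafIndex v ∧
      (leafIndex (parent n v) : ℕ) = leafIndex v + 1 ∧
      f (σ (leafIndex v)) = c ∧ f (σ (leafIndex (parent n v))) ≠ c := by
  induction e with | h x y =>
  obtain ⟨hxy, hne⟩ := mem_changingEdges.mp he
  obtain ⟨v, w, hxy_vw, hvw, hlt, hne⟩ : ∃ v w, s(x, y) = s(v, w) ∧ (graph n).Adj v w ∧
      leafIndex v < leafIndex w ∧ f (σ (leafIndex v)) ≠ f (σ (leafIndex w)) := by
    rcases lt_or_gt_of_ne fun h ↦ hne (congrArg (fun k ↦ f (σ k)) h) with hlt | hlt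
    exacts [⟨x, y, rfl, hxy, hlt, hne⟩, ⟨y, x, Sym2.eq_swap, hxy.symm, hlt, hne.symm⟩]
  obtain ⟨rfl, hv, hw⟩ := eq_parent_of_adj_of_leafIndex_lt hvw hlt
  rw [hxy_vw]
  have hwc : f (σ (leafIndex (parent n v))) ≠ c := fun hwc ↦ hne ((hf hlt.le hwc).trans hwc.symm)
  exact ⟨v, rfl, hv, hw, by cases c <;> simp_all, hwc⟩

theorem ps_tree_le_one (hn : 2 ≤ n) (σ : Equiv.Perm (Fin n)) {f : Fin n → Bool} {c : Bool}
    (hf : IsLowerSet {k | f (σ k) = c}) : ps f (tree hn σ) ≤ 1 := by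
  refine (ps_le_changingNumber (g := fun v ↦ f (σ (leafIndex v))) fun i ↦ ?_).trans ?_
  · simp [tree, leafIndex_leafVertex]
  rw [changingNumber_eq_ncard, Set.ncard_le_one_iff]
  intro e₁ e₂ he₁ he₂
  obtain ⟨v₁, rfl, hv₁, hp₁, hc₁, hpc₁⟩ := exists_parent_of_mem_changingEdges hn σ hf he₁
  obtain ⟨v₂, rfl, hv₂, hp₂, hc₂, hpc₂⟩ := exists_parent_of_mem_changingEdges hn σ hf he₂
  -- Between two cuts the character would have to return to the value `c`.
  have hindex : leafIndex v₁ = leafIndex v₂ := by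
    by_contra hne
    rcases lt_or_gt_of_ne hne with hlt | hlt
    · exact hpc₁ (hf (show leafIndex (parent n v₁) ≤ leafIndex v₂ by rw [Fin.le_def]; omega) hc₂)
    · exact hpc₂ (hf (show leafIndex (parent n v₂) ≤ leafIndex v₁ by rw [Fin.le_def]; omega) hc₁)
  obtain rfl : v₁ = v₂ := Fin.ext (by rw [hv₁, hv₂, hindex])
  rfl

end Caterpillar

/-- Two non-constant characters are compatible with each other if and only if some
binary phylogenetic tree gives both of them parsimony score 1. -/
theorem stmt11 (n : ℕ) (hn : 2 ≤ n) (f₁ f₂ : Fin n → Bool)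
    (h₁ : ∃ i j, f₁ i ≠ f₁ j) (h₂ : ∃ i j, f₂ i ≠ f₂ j) :
    CharCompatible f₁ f₂ ↔ ∃ T : PhyloTree n, ps f₁ T = 1 ∧ ps f₂ T = 1 := by
  refine ⟨fun hc ↦ ?_, fun ⟨T, hT₁, hT₂⟩ ↦ charCompatible_of_ps_eq_one hT₁ hT₂⟩
  obtain ⟨p, q, hpq⟩ := charCompatible_iff.mp hc
  obtain ⟨σ, hσ₁, hσ₂⟩ := exists_perm_isLowerSet hpq
  exact ⟨Caterpillar.tree hn σ, (Caterpillar.ps_tree_le_one hn σ hσ₁).antisymm (one_le_ps h₁),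
    (Caterpillar.ps_tree_le_one hn σ hσ₂).antisymm (one_le_ps h₂)⟩
end
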